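/- arXiv:1106.2331 — 4 statements merged into one kernel-verified Lean document; each statement's English description precedes it below -/
import Mathlib

section
/- Let Γ be a finite simple graph and G = G(Γ) the associated partially commutative group. Then Conj_N(G), the subgroup of normal conjugating automorphisms, is a normal subgroup of St^conj(K): if φ ∈ Conj_N(G) and ψ ∈ St^conj(K) then ψ⁻¹φψ ∈ Conj_N(G). -/
namespace PCG

variable {X : Type*}

/-- The orthogonal complement of a set of vertices: all vertices at distance at
most one from every element of `Y`. -/
def perp (Γ : SimpleGraph X) (Y : Set X) : Set X :=
  {u | ∀ y ∈ Y, u = y ∨ Γ.Adj u y}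

/-- The closure operator `cl(Y) = Y^⊥⊥`. -/
def cl (Γ : SimpleGraph X) (Y : Set X) : Set X :=
  perp Γ (perp Γ Y)

/-- The admissible-set operator `𝔞(Y) = ⋂_{y ∈ Y} (y^⊥ \ {y})^⊥` (with `𝔞(∅) = X`). -/
def aSet (Γ : SimpleGraph X) (Y : Set X) : Set X :=
  ⋂ y ∈ Y, perp Γ (perp Γ {y} \ {y})

/-- A set is admissible if it is `𝔞(Y)` for some `Y`. -/
def IsAdmissible (Γ : SimpleGraph X) (A : Set X) : Prop :=
  ∃ Y : Set X, A = aSet Γ Y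

/-- A set is closed if it equals its closure. -/
def IsClosedSet (Γ : SimpleGraph X) (Y : Set X) : Prop :=
  Y = cl Γ Y

/-- `x` dominates `y` if `x^⊥ ∩ y^⊥ = y^⊥ \ {y}`. -/
def Dominates (Γ : SimpleGraph X) (x y : X) : Prop :=
  perp Γ {x} ∩ perp Γ {y} = perp Γ {y} \ {y}

/-- The set of dominated vertices. -/
def Dom (Γ : SimpleGraph X) : Set X :=
  {y | ∃ x, Dominates Γ x y}

/-- The `∼⊥`-equivalence class of `x`: vertices with the same star as `x`. -/
def perpClass (Γ : SimpleGraph X) (x : X) : Set X :=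
  {y | perp Γ {y} = perp Γ {x}}

/-- The `∼◇`-equivalence class of `x`: vertices with the same link as `x`. -/
def diaClass (Γ : SimpleGraph X) (x : X) : Set X :=
  {y | perp Γ {y} \ {y} = perp Γ {x} \ {x}}

/-- The `∼`-equivalence class `[x]`. -/
def simClass (Γ : SimpleGraph X) (x : X) : Set X :=
  perpClass Γ x ∪ diaClass Γ x

/-- The outer admissible set of `y`. -/
def out (Γ : SimpleGraph X) (y : X) : Set X :=
  {x | Dominates Γ x y ∧ simClass Γ x ≠ simClass Γ y}

/-- `C` is the vertex set of a connected component of the full subgraph of `Γ` on `S`. -/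
def IsCompOf (Γ : SimpleGraph X) (S : Set X) (C : Set X) : Prop :=
  ∃ K : (Γ.induce S).ConnectedComponent, C = Subtype.val '' K.supp

/-- Balanced graphs. -/
def Balanced (Γ : SimpleGraph X) : Prop :=
  ∀ v ∈ Dom Γ, out Γ v = ∅ ∨ ∃ C : Set X, IsCompOf Γ ((perp Γ {v})ᶜ) C ∧ out Γ v ⊆ C

/-- Relators of the partially commutative group: commutators of adjacent vertices. -/
def raagRels (Γ : SimpleGraph X) : Set (FreeGroup X) :=
  {w | ∃ x y : X, Γ.Adj x y ∧
    w = FreeGroup.of x * FreeGroup.of y * (FreeGroup.of x)⁻¹ * (FreeGroup.of y)⁻¹}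

/-- The partially commutative group (right-angled Artin group) of `Γ`. -/
abbrev RAAG (Γ : SimpleGraph X) : Type _ := PresentedGroup (raagRels Γ)

/-- The generator of `RAAG Γ` corresponding to a vertex. -/
def gen (Γ : SimpleGraph X) (x : X) : RAAG Γ := PresentedGroup.of x

/-- The canonical parabolic subgroup generated by a set of vertices. -/
def parab (Γ : SimpleGraph X) (Y : Set X) : Subgroup (RAAG Γ) :=
  Subgroup.closure (gen Γ '' Y)

/-- Conjugate of a subgroup: `H^f = f⁻¹ H f`. -/
def conjBy {G : Type*} [Group G] (H : Subgroup G) (f : G) : Subgroup G :=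
  Subgroup.map (MulAut.conj f⁻¹).toMonoidHom H

/-- Inversions. -/
def InvSet (Γ : SimpleGraph X) : Set (MulAut (RAAG Γ)) :=
  {φ | ∃ x : X, φ (gen Γ x) = (gen Γ x)⁻¹ ∧ ∀ y : X, y ≠ x → φ (gen Γ y) = gen Γ y}

/-- Transvections. -/
def TrSet (Γ : SimpleGraph X) : Set (MulAut (RAAG Γ)) :=
  {φ | ∃ x y : X, y ≠ x ∧
    (φ (gen Γ x) = gen Γ x * gen Γ y ∨ φ (gen Γ x) = (gen Γ y)⁻¹ * gen Γ x) ∧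
    ∀ z : X, z ≠ x → φ (gen Γ z) = gen Γ z}

/-- Elementary conjugating automorphisms. -/
def LInnSet (Γ : SimpleGraph X) : Set (MulAut (RAAG Γ)) :=
  {φ | ∃ (x : X) (C : Set X) (ε : ℤ), (ε = 1 ∨ ε = -1) ∧
    IsCompOf Γ ((perp Γ {x})ᶜ) C ∧
    (∀ u ∈ C, φ (gen Γ u) = (gen Γ x ^ ε)⁻¹ * gen Γ u * gen Γ x ^ ε) ∧
    (∀ u : X, u ∉ C → φ (gen Γ u) = gen Γ u)}

/-- The subgroup `Aut*(G)` generated by inversions, transvections and elementary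
conjugating automorphisms. -/
def AutStar (Γ : SimpleGraph X) : Subgroup (MulAut (RAAG Γ)) :=
  Subgroup.closure (InvSet Γ ∪ TrSet Γ ∪ LInnSet Γ)

/-- Basis-conjugating automorphisms. -/
def IsBasisConj (Γ : SimpleGraph X) (φ : MulAut (RAAG Γ)) : Prop :=
  ∀ x : X, ∃ g : RAAG Γ, φ (gen Γ x) = g⁻¹ * gen Γ x * g

/-- Normal conjugating automorphisms. -/
def IsConjN (Γ : SimpleGraph X) (φ : MulAut (RAAG Γ)) : Prop :=
  IsBasisConj Γ φ ∧
    ∀ x : X, ∃ f : RAAG Γ, ∀ z ∈ aSet Γ {x}, φ (gen Γ z) = f⁻¹ * gen Γ z * f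

/-- Vertex conjugating automorphisms. -/
def IsConjV (Γ : SimpleGraph X) (φ : MulAut (RAAG Γ)) : Prop :=
  IsBasisConj Γ φ ∧
    ∀ x : X, ∃ f : RAAG Γ, ∀ y ∈ simClass Γ x, φ (gen Γ y) = f⁻¹ * gen Γ y * f

/-- Membership in `St(K)`. -/
def IsStK (Γ : SimpleGraph X) (φ : MulAut (RAAG Γ)) : Prop :=
  ∀ A : Set X, IsAdmissible Γ A →
    Subgroup.map φ.toMonoidHom (parab Γ A) = parab Γ A

/-- Membership in `St(L)`. -/
def IsStL (Γ : SimpleGraph X) (φ : MulAut (RAAG Γ)) : Prop :=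
  ∀ A : Set X, IsClosedSet Γ A →
    Subgroup.map φ.toMonoidHom (parab Γ A) = parab Γ A

/-- Membership in `St^conj(K)`. -/
def IsStConjK (Γ : SimpleGraph X) (φ : MulAut (RAAG Γ)) : Prop :=
  ∀ A : Set X, IsAdmissible Γ A →
    ∃ f : RAAG Γ, Subgroup.map φ.toMonoidHom (parab Γ A) = conjBy (parab Γ A) f

/-- Aggregate conjugating automorphisms. -/
def AggrSet (Γ : SimpleGraph X) : Set (MulAut (RAAG Γ)) :=
  {φ | ∃ (x : X) (C : Set X), IsCompOf Γ ({x}ᶜ) C ∧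
    (∀ y ∈ C, φ (gen Γ y) = (gen Γ x)⁻¹ * gen Γ y * gen Γ x) ∧
    (∀ y : X, y ∉ C → φ (gen Γ y) = gen Γ y)}

/-- Elementary singular conjugating automorphisms: those `α_{C,x^ε}` with `C` a singleton. -/
def LInnSSet (Γ : SimpleGraph X) : Set (MulAut (RAAG Γ)) :=
  {φ | ∃ (x y : X) (ε : ℤ), (ε = 1 ∨ ε = -1) ∧
    IsCompOf Γ ((perp Γ {x})ᶜ) {y} ∧
    φ (gen Γ y) = (gen Γ x ^ ε)⁻¹ * gen Γ y * gen Γ x ^ ε ∧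
    ∀ u : X, u ≠ y → φ (gen Γ u) = gen Γ u}

/-- Basic collected conjugating automorphisms. -/
def LInnCSet (Γ : SimpleGraph X) : Set (MulAut (RAAG Γ)) :=
  {φ | ∃ x u : X, Dominates Γ x u ∧
    (∀ v ∈ simClass Γ u \ {x}, φ (gen Γ v) = (gen Γ x)⁻¹ * gen Γ v * gen Γ x) ∧
    (∀ v : X, v ∉ simClass Γ u \ {x} → φ (gen Γ v) = gen Γ v)}

/-- Regular elementary conjugating automorphisms. -/
def LInnRSet (Γ : SimpleGraph X) : Set (MulAut (RAAG Γ)) :=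
  (LInnSet Γ ∩ {φ | IsConjV Γ φ}) \ LInnSSet Γ

/-- Basic vertex conjugating automorphisms. -/
def LInnVSet (Γ : SimpleGraph X) : Set (MulAut (RAAG Γ)) :=
  LInnRSet Γ ∪ LInnCSet Γ

/-- Tame extended elementary conjugating automorphisms. -/
def LInnTSet (Γ : SimpleGraph X) : Set (MulAut (RAAG Γ)) :=
  {φ | ∃ (y : X) (L : Set X) (ε : ℤ), (ε = 1 ∨ ε = -1) ∧
    (∀ v ∈ L, ∃ C : Set X, IsCompOf Γ ((perp Γ {y})ᶜ) C ∧ v ∈ C ∧ C ⊆ L) ∧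
    aSet Γ {y} ∩ L = ∅ ∧
    (∀ u ∈ L, φ (gen Γ u) = (gen Γ y ^ ε)⁻¹ * gen Γ u * gen Γ y ^ ε) ∧
    (∀ u : X, u ∉ L → φ (gen Γ u) = gen Γ u)}

/-- `K`-minimal vertices. -/
def KMin (Γ : SimpleGraph X) (x : X) : Prop :=
  ∀ y : X, aSet Γ {y} ⊆ aSet Γ {x} → aSet Γ {y} = aSet Γ {x}

/-- `L`-minimal vertices. -/
def LMin (Γ : SimpleGraph X) (x : X) : Prop :=
  ∀ y : X, cl Γ {y} ⊆ cl Γ {x} → cl Γ {y} = cl Γ {x}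

end PCG

/-
If `φ` acts on `G(𝔞(x))` as conjugation by `g` and `ψ` maps `G(𝔞(x))` onto `G(𝔞(x))^f`, then
`ψ⁻¹φψ` acts on `G(𝔞(x))` as conjugation by `ψ⁻¹(f⁻¹ g φ(f))`. Every `x` lies in `𝔞(x)`, so this
single condition also makes `ψ⁻¹φψ` basis-conjugating.
-/

theorem MulAut.conj_mul_apply_of_map_eq {G : Type*} [Group G] {φ ψ : MulAut G} {H : Subgroup G}
    {g f : G} (hφ : ∀ w ∈ H, φ w = g⁻¹ * w * g)
    (hψ : H.map ψ.toMonoidHom = H.map (MulAut.conj f⁻¹).toMonoidHom) :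
    ∀ z ∈ H, (ψ⁻¹ * φ * ψ) z = (ψ⁻¹ (f⁻¹ * g * φ f))⁻¹ * z * ψ⁻¹ (f⁻¹ * g * φ f) := by
  intro z hz
  obtain ⟨w, hw, hwz⟩ : ψ z ∈ H.map (MulAut.conj f⁻¹).toMonoidHom := hψ ▸ ⟨z, hz, rfl⟩
  have hψz : ψ z = f⁻¹ * w * f := by simpa [MulAut.conj_apply] using hwz.symm
  apply ψ.injective
  simp only [MulAut.mul_apply, MulAut.apply_inv_self, map_mul, map_inv]
  rw [hψz, map_mul, map_mul, map_inv, hφ w hw]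
  group

namespace PCG

section

variable {X : Type*}

theorem mem_aSet_singleton_self (Γ : SimpleGraph X) (x : X) : x ∈ aSet Γ {x} := by
  simp only [aSet, Set.mem_iInter, Set.mem_singleton_iff]
  rintro y rfl u ⟨hu, hux⟩
  simp only [perp, Set.mem_ofPred_eq, Set.mem_singleton_iff, forall_eq] at hu hux
  exact .inr (hu.resolve_left hux).symm

theorem isConjN_of_forall_aSet {Γ : SimpleGraph X} {φ : MulAut (RAAG Γ)}
    (h : ∀ x : X, ∃ f : RAAG Γ, ∀ z ∈ aSet Γ {x}, φ (gen Γ z) = f⁻¹ * gen Γ z * f) :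
    IsConjN Γ φ := by
  refine ⟨fun x => ?_, h⟩
  obtain ⟨f, hf⟩ := h x
  exact ⟨f, hf x (mem_aSet_singleton_self Γ x)⟩

theorem map_eq_conj_on_parab {Γ : SimpleGraph X} {φ : MulAut (RAAG Γ)} {Y : Set X}
    {g : RAAG Γ} (h : ∀ z ∈ Y, φ (gen Γ z) = g⁻¹ * gen Γ z * g) :
    ∀ w ∈ parab Γ Y, φ w = g⁻¹ * w * g := by
  have hgen : Set.EqOn φ.toMonoidHom (MulAut.conj g⁻¹).toMonoidHom (gen Γ '' Y) := by
    rintro _ ⟨z, hz, rfl⟩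
    simpa [MulAut.conj_apply] using h z hz
  intro w hw
  simpa [MulAut.conj_apply] using MonoidHom.eqOn_closure hgen hw

end

theorem conjN_normal_in_stConjK_general {X : Type*} (Γ : SimpleGraph X)
    (φ ψ : MulAut (RAAG Γ)) (hφ : IsConjN Γ φ) (hψ : IsStConjK Γ ψ) :
    IsConjN Γ (ψ⁻¹ * φ * ψ) := by
  refine isConjN_of_forall_aSet fun x => ?_
  obtain ⟨g, hg⟩ := hφ.2 x
  obtain ⟨f, hf⟩ := hψ (aSet Γ {x}) ⟨{x}, rfl⟩
  have hconj := MulAut.conj_mul_apply_of_map_eq (map_eq_conj_on_parab hg) hf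
  exact ⟨_, fun z hz => hconj _ (Subgroup.subset_closure ⟨z, hz, rfl⟩)⟩

/-- `Conj_N(G)` is a normal subgroup of `St^conj(K)`. -/
theorem conjN_normal_in_stConjK {X : Type*} [Fintype X] (Γ : SimpleGraph X)
    (φ ψ : MulAut (RAAG Γ)) (hφ : IsConjN Γ φ) (hψ : IsStConjK Γ ψ) :
    IsConjN Γ (ψ⁻¹ * φ * ψ) :=
  conjN_normal_in_stConjK_general Γ φ ψ hφ hψ

end PCG
end

section
/- Let Γ be a finite simple graph, G = G(Γ), and let Aut*(G) be the subgroup of Aut(G) generated by Inv ∪ Tr ∪ LInn. If φ ∈ Aut*(G), then for every x ∈ X there exists f_x ∈ G such that φ(G(𝔞(x))) = G(𝔞(x))^{f_x}. -/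
/-!
The automorphisms mapping a subgroup `H` onto a conjugate of `H` form a subgroup of `Aut(G)`, so
it suffices to treat the generators of `Aut*(G)`. Inversions and transvections even stabilize
`G(𝔞(z))`: a transvection `x ↦ xy` forces `lk(x) ⊆ st(y)`, and then `x ∈ 𝔞(z)` implies
`y ∈ 𝔞(z)`. An elementary conjugating automorphism `α_{C,x^ε}` stabilizes `G(𝔞(z))` when
`x ∈ 𝔞(z)`. Otherwise `𝔞(z)` either misses `C` or lies in `C ∪ x^⊥`, and since `x^ε` commutes
with `x^⊥ \ {x}`, `α_{C,x^ε}` acts on `𝔞(z)` trivially or as conjugation by `x^ε`.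
-/

namespace PCG

open scoped Pointwise

section ConjStabilizer

variable {G : Type*} [Group G]

lemma mulAut_mul_conj (φ : MulAut G) (g : G) :
    φ * MulAut.conj g = MulAut.conj (φ g) * φ := by
  ext x
  simp

def conjStabilizer (H : Subgroup G) : Subgroup (MulAut G) where
  carrier := {φ | ∃ g : G, φ • H = MulAut.conj g • H}
  one_mem' := ⟨1, by simp⟩
  mul_mem' := by
    rintro φ ψ ⟨g, hg⟩ ⟨f, hf⟩
    refine ⟨φ f * g, ?_⟩
    rw [mul_smul, hf, ← mul_smul, mulAut_mul_conj, mul_smul, hg, ← mul_smul, map_mul]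
  inv_mem' := by
    rintro φ ⟨g, hg⟩
    refine ⟨φ⁻¹ g⁻¹, ?_⟩
    calc φ⁻¹ • H = (φ⁻¹ * MulAut.conj g⁻¹ * φ) • H := by
          rw [mul_smul, hg, ← mul_smul, mul_assoc, ← map_mul, inv_mul_cancel, map_one, mul_one]
      _ = MulAut.conj (φ⁻¹ g⁻¹) • H := by
          rw [mulAut_mul_conj, mul_assoc, inv_mul_cancel, mul_one]

lemma mem_conjStabilizer_of_smul_eq_self {H : Subgroup G} {φ : MulAut G} (h : φ • H = H) :
    φ ∈ conjStabilizer H :=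
  ⟨1, by rw [h, map_one, one_smul]⟩

end ConjStabilizer

section Parabolic

variable {X : Type*} (Γ : SimpleGraph X)

lemma gen_mem_parab {A : Set X} {u : X} (hu : u ∈ A) : gen Γ u ∈ parab Γ A :=
  Subgroup.subset_closure ⟨u, hu, rfl⟩

lemma commute_gen_of_adj {a b : X} (h : Γ.Adj a b) : Commute (gen Γ a) (gen Γ b) := by
  have hrel : gen Γ a * gen Γ b * (gen Γ a)⁻¹ * (gen Γ b)⁻¹ = 1 :=
    (QuotientGroup.eq_one_iff _).mpr (Subgroup.subset_normalClosure ⟨a, b, h, rfl⟩)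
  rwa [← commutatorElement_eq_one_iff_commute, commutatorElement_def]

/-- Two generators commute only if they are equal or adjacent: otherwise the homomorphism onto
`S₃` sending them to the transpositions `(0 1)` and `(1 2)`, and every other generator to `1`,
respects the relators but not their commutation. -/
lemma eq_or_adj_of_commute_gen {a b : X} (h : Commute (gen Γ a) (gen Γ b)) :
    a = b ∨ Γ.Adj a b := by
  classical
  by_contra! hab
  obtain ⟨hne, hnadj⟩ := hab
  let f : X → Equiv.Perm (Fin 3) := fun v =>
    if v = a then Equiv.swap 0 1 else if v = b then Equiv.swap 1 2 else 1
  have hf : ∀ u v, Γ.Adj u v → Commute (f u) (f v) := by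
    intro u v huv
    simp only [f]
    split_ifs <;> subst_vars <;>
      first | exact Commute.one_left _ | exact Commute.one_right _ | simp_all [SimpleGraph.adj_comm]
  have hrels : ∀ r ∈ raagRels Γ, FreeGroup.lift f r = 1 := by
    rintro _ ⟨u, v, huv, rfl⟩
    simpa [commutatorElement_def] using commutatorElement_eq_one_iff_commute.mpr (hf u v huv)
  have hS₃ := h.map (PresentedGroup.toGroup hrels)
  simp only [gen, PresentedGroup.toGroup.of, f, if_pos, if_neg hne.symm] at hS₃
  revert hS₃
  unfold Commute SemiconjBy
  decide

variable {Γ}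

lemma smul_parab_congr {φ ψ : MulAut (RAAG Γ)} {A : Set X}
    (h : ∀ u ∈ A, φ (gen Γ u) = ψ (gen Γ u)) : φ • parab Γ A = ψ • parab Γ A := by
  simp only [parab, Subgroup.smul_closure, ← Set.image_smul, ← Set.image_comp]
  exact congrArg _ (Set.image_congr h)

lemma smul_gen_mem_smul_parab (φ : MulAut (RAAG Γ)) {A : Set X} {u : X} (hu : u ∈ A) :
    φ (gen Γ u) ∈ φ • parab Γ A :=
  Subgroup.smul_mem_pointwise_smul _ φ _ (gen_mem_parab Γ hu)

lemma smul_parab_eq_self {φ : MulAut (RAAG Γ)} {A : Set X}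
    (hmaps : ∀ u ∈ A, φ (gen Γ u) ∈ parab Γ A) (hsurj : ∀ u ∈ A, gen Γ u ∈ φ • parab Γ A) :
    φ • parab Γ A = parab Γ A := by
  apply le_antisymm
  · rw [parab, Subgroup.smul_closure, Subgroup.closure_le]
    rintro _ ⟨_, ⟨u, hu, rfl⟩, rfl⟩
    exact hmaps u hu
  · rw [parab, Subgroup.closure_le]
    rintro _ ⟨u, hu, rfl⟩
    exact hsurj u hu

end Parabolic

section Graph

variable {X : Type*} {Γ : SimpleGraph X}

lemma mem_perp_singleton {x u : X} : u ∈ perp Γ {x} ↔ u = x ∨ Γ.Adj u x := by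
  simp [perp]

lemma mem_aSet_singleton {z u : X} :
    u ∈ aSet Γ {z} ↔ ∀ w, Γ.Adj w z → u = w ∨ Γ.Adj u w := by
  simp only [aSet, Set.mem_singleton_iff, Set.iInter_iInter_eq_left, perp, Set.mem_ofPred_eq,
    Set.mem_sdiff, forall_eq]
  refine ⟨fun h w hw => h w ⟨Or.inr hw, hw.ne⟩, ?_⟩
  rintro h w ⟨hw | hw, hwz⟩
  · exact absurd hw hwz
  · exact h w hw

lemma mem_aSet_of_link_subset_star {x y z : X} (hlink : perp Γ {x} \ {x} ⊆ perp Γ {y})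
    (hx : x ∈ aSet Γ {z}) : y ∈ aSet Γ {z} := by
  have hlink' : ∀ u, Γ.Adj u x → u = y ∨ Γ.Adj u y := fun u hu =>
    mem_perp_singleton.mp (hlink ⟨mem_perp_singleton.mpr (Or.inr hu), hu.ne⟩)
  rcases eq_or_ne y x with rfl | hyx
  · exact hx
  rw [mem_aSet_singleton] at hx ⊢
  intro w hw
  rcases hx w hw with rfl | hxw
  · rcases hlink' z hw.symm with rfl | hzy
    · exact Or.inr hw.symm
    · exact Or.inr ((hx y hzy.symm).resolve_left hyx.symm).symm
  · exact (hlink' w hxw.symm).imp Eq.symm Γ.adj_symm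

lemma IsCompOf.subset {S C : Set X} (hC : IsCompOf Γ S C) : C ⊆ S := by
  obtain ⟨K, rfl⟩ := hC
  rintro _ ⟨v, -, rfl⟩
  exact v.2

lemma IsCompOf.mem_of_adj {S C : Set X} (hC : IsCompOf Γ S C) {a b : X} (ha : a ∈ C)
    (hb : b ∈ S) (hab : Γ.Adj a b) : b ∈ C := by
  obtain ⟨K, rfl⟩ := hC
  obtain ⟨a, haK, rfl⟩ := ha
  refine ⟨⟨b, hb⟩, ?_, rfl⟩
  rw [SimpleGraph.ConnectedComponent.mem_supp_iff] at haK ⊢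
  rw [← haK]
  exact (SimpleGraph.ConnectedComponent.connectedComponentMk_eq_of_adj
    (G := Γ.induce S) (v := a) (w := ⟨b, hb⟩) hab).symm

/-- A vertex `w ∈ lk(z)` outside `x^⊥` witnesses `x ∉ 𝔞(z)`; every vertex of `𝔞(z)` lies in the
star of `w`, so the part of `𝔞(z)` outside `x^⊥` is connected through `w`. -/
lemma aSet_subset_union_perp {x z a : X} {C : Set X} (hC : IsCompOf Γ (perp Γ {x})ᶜ C)
    (hx : x ∉ aSet Γ {z}) (haC : a ∈ C) (haA : a ∈ aSet Γ {z}) :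
    aSet Γ {z} ⊆ C ∪ perp Γ {x} := by
  simp only [mem_aSet_singleton, not_forall, not_or] at hx
  obtain ⟨w, hwz, hxw, hnadj⟩ := hx
  have hwS : w ∈ (perp Γ {x})ᶜ := fun h =>
    (mem_perp_singleton.mp h).elim (fun h => hxw h.symm) (fun h => hnadj h.symm)
  have hwC : w ∈ C := by
    rcases mem_aSet_singleton.mp haA w hwz with rfl | haw
    · exact haC
    · exact hC.mem_of_adj haC hwS haw
  intro b hb
  by_cases hbx : b ∈ perp Γ {x}
  · exact Or.inr hbx
  rcases mem_aSet_singleton.mp hb w hwz with rfl | hbw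
  · exact Or.inl hwC
  · exact Or.inl (hC.mem_of_adj hwC hbx hbw.symm)

end Graph

section Generators

variable {X : Type*} {Γ : SimpleGraph X} {φ : MulAut (RAAG Γ)}

lemma smul_parab_of_mem_invSet (hφ : φ ∈ InvSet Γ) (A : Set X) :
    φ • parab Γ A = parab Γ A := by
  obtain ⟨x, hx, hfix⟩ := hφ
  refine smul_parab_eq_self (fun u hu => ?_) (fun u hu => ?_)
  · rcases eq_or_ne u x with rfl | hne
    · rw [hx]
      exact inv_mem (gen_mem_parab Γ hu)
    · rw [hfix u hne]
      exact gen_mem_parab Γ hu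
  · have hu' := smul_gen_mem_smul_parab φ hu
    rcases eq_or_ne u x with rfl | hne
    · rw [hx] at hu'
      simpa using inv_mem hu'
    · rwa [hfix u hne] at hu'

/-- A neighbour `u` of `x` is fixed by `φ`, so it commutes with `φ x = x y^{±1}` as well as with
`x`, hence with `y`. -/
lemma link_subset_star_of_transvection {x y : X}
    (hx : φ (gen Γ x) = gen Γ x * gen Γ y ∨ φ (gen Γ x) = (gen Γ y)⁻¹ * gen Γ x)
    (hfix : ∀ z, z ≠ x → φ (gen Γ z) = gen Γ z) : perp Γ {x} \ {x} ⊆ perp Γ {y} := by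
  rintro u ⟨hu, hux⟩
  have hadj : Γ.Adj u x := (mem_perp_singleton.mp hu).resolve_left hux
  have hc : Commute (gen Γ u) (gen Γ x) := commute_gen_of_adj Γ hadj
  have hcφ : Commute (gen Γ u) (φ (gen Γ x)) := by
    simpa [hfix u hux] using hc.map φ.toMonoidHom
  have hcy : Commute (gen Γ u) (gen Γ y) := by
    rcases hx with h | h <;> rw [h] at hcφ
    · simpa using hc.inv_right.mul_right hcφ
    · simpa using (hcφ.mul_right hc.inv_right).inv_right
  exact mem_perp_singleton.mpr (eq_or_adj_of_commute_gen Γ hcy)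

lemma smul_parab_of_forall_fixed {A : Set X} (hfix : ∀ u ∈ A, φ (gen Γ u) = gen Γ u) :
    φ • parab Γ A = parab Γ A :=
  (smul_parab_congr (ψ := 1) hfix).trans (one_smul _ _)

lemma smul_parab_aSet_of_mem_trSet (hφ : φ ∈ TrSet Γ) (z : X) :
    φ • parab Γ (aSet Γ {z}) = parab Γ (aSet Γ {z}) := by
  obtain ⟨x, y, hyx, hx, hfix⟩ := hφ
  by_cases hxA : x ∈ aSet Γ {z}
  swap
  · exact smul_parab_of_forall_fixed fun u hu => hfix u (ne_of_mem_of_not_mem hu hxA)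
  have hyA : y ∈ aSet Γ {z} :=
    mem_aSet_of_link_subset_star (link_subset_star_of_transvection hx hfix) hxA
  refine smul_parab_eq_self (fun u hu => ?_) (fun u hu => ?_)
  · rcases eq_or_ne u x with rfl | hne
    · rcases hx with h | h <;> rw [h]
      · exact mul_mem (gen_mem_parab Γ hu) (gen_mem_parab Γ hyA)
      · exact mul_mem (inv_mem (gen_mem_parab Γ hyA)) (gen_mem_parab Γ hu)
    · rw [hfix u hne]
      exact gen_mem_parab Γ hu
  · have hu' := smul_gen_mem_smul_parab φ hu
    have hy' := smul_gen_mem_smul_parab φ hyA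
    rw [hfix y hyx] at hy'
    rcases eq_or_ne u x with rfl | hne
    · rcases hx with h | h <;> rw [h] at hu'
      · simpa using mul_mem hu' (inv_mem hy')
      · simpa using mul_mem hy' hu'
    · rwa [hfix u hne] at hu'

section PartialConjugation

variable {x : X} {C : Set X} {ε : ℤ}
  (hconj : ∀ u ∈ C, φ (gen Γ u) = (gen Γ x ^ ε)⁻¹ * gen Γ u * gen Γ x ^ ε)
  (hfix : ∀ u, u ∉ C → φ (gen Γ u) = gen Γ u)
include hconj hfix

lemma smul_parab_of_partialConj_of_mem {A : Set X} (hxC : x ∉ C) (hxA : x ∈ A) :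
    φ • parab Γ A = parab Γ A := by
  have hxP : gen Γ x ^ ε ∈ parab Γ A := zpow_mem (gen_mem_parab Γ hxA) ε
  refine smul_parab_eq_self (fun u hu => ?_) (fun u hu => ?_)
  · by_cases huC : u ∈ C
    · rw [hconj u huC]
      exact mul_mem (mul_mem (inv_mem hxP) (gen_mem_parab Γ hu)) hxP
    · rw [hfix u huC]
      exact gen_mem_parab Γ hu
  · have hu' := smul_gen_mem_smul_parab φ hu
    by_cases huC : u ∈ C
    · have hx' := zpow_mem (smul_gen_mem_smul_parab φ hxA) ε
      rw [hfix x hxC] at hx'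
      rw [hconj u huC] at hu'
      simpa [mul_assoc] using mul_mem (mul_mem hx' hu') (inv_mem hx')
    · rwa [hfix u huC] at hu'

lemma exists_conj_eqOn_aSet_of_partialConj (hC : IsCompOf Γ (perp Γ {x})ᶜ C) {z : X}
    (hxA : x ∉ aSet Γ {z}) :
    ∃ g : RAAG Γ, ∀ u ∈ aSet Γ {z}, φ (gen Γ u) = MulAut.conj g (gen Γ u) := by
  by_cases hmeet : ∃ a ∈ C, a ∈ aSet Γ {z}
  swap
  · exact ⟨1, fun u hu => by simpa using hfix u fun huC => hmeet ⟨u, huC, hu⟩⟩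
  obtain ⟨a, haC, haA⟩ := hmeet
  refine ⟨(gen Γ x ^ ε)⁻¹, fun u hu => ?_⟩
  rw [MulAut.conj_apply, inv_inv]
  rcases aSet_subset_union_perp hC hxA haC haA hu with huC | hux
  · exact hconj u huC
  have hadj : Γ.Adj u x :=
    (mem_perp_singleton.mp hux).resolve_left (ne_of_mem_of_not_mem hu hxA)
  rw [hfix u (fun huC => hC.subset huC hux), mul_assoc,
    ((commute_gen_of_adj Γ hadj).zpow_right ε).eq, inv_mul_cancel_left]

end PartialConjugation

lemma mem_conjStabilizer_of_mem_LInnSet (hφ : φ ∈ LInnSet Γ) (z : X) :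
    φ ∈ conjStabilizer (parab Γ (aSet Γ {z})) := by
  obtain ⟨x, C, ε, -, hC, hconj, hfix⟩ := hφ
  by_cases hxA : x ∈ aSet Γ {z}
  · have hxC : x ∉ C := fun hxC => hC.subset hxC (mem_perp_singleton.mpr (Or.inl rfl))
    exact mem_conjStabilizer_of_smul_eq_self
      (smul_parab_of_partialConj_of_mem hconj hfix hxC hxA)
  · obtain ⟨g, hg⟩ := exists_conj_eqOn_aSet_of_partialConj hconj hfix hC hxA
    exact ⟨g, smul_parab_congr hg⟩

end Generators

lemma autStar_le_conjStabilizer {X : Type*} {Γ : SimpleGraph X} (z : X) :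
    AutStar Γ ≤ conjStabilizer (parab Γ (aSet Γ {z})) := by
  refine (Subgroup.closure_le _).mpr ?_
  rintro φ ((hφ | hφ) | hφ)
  · exact mem_conjStabilizer_of_smul_eq_self (smul_parab_of_mem_invSet hφ _)
  · exact mem_conjStabilizer_of_smul_eq_self (smul_parab_aSet_of_mem_trSet hφ z)
  · exact mem_conjStabilizer_of_mem_LInnSet hφ z

theorem autStar_maps_aSet_to_conjugate_general {X : Type*} (Γ : SimpleGraph X)
    (φ : MulAut (RAAG Γ)) (h : φ ∈ AutStar Γ) :
    ∀ x : X, ∃ f : RAAG Γ,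
      Subgroup.map φ.toMonoidHom (parab Γ (aSet Γ {x})) =
        conjBy (parab Γ (aSet Γ {x})) f := by
  intro x
  obtain ⟨g, hg⟩ := autStar_le_conjStabilizer x h
  refine ⟨g⁻¹, ?_⟩
  rw [conjBy, inv_inv]
  exact hg

/-- Every element of `Aut*(G)` maps each `G(𝔞(x))` to a
conjugate of itself. -/
theorem autStar_maps_aSet_to_conjugate {X : Type*} [Fintype X] (Γ : SimpleGraph X)
    (φ : MulAut (RAAG Γ)) (h : φ ∈ AutStar Γ) :
    ∀ x : X, ∃ f : RAAG Γ,
      Subgroup.map φ.toMonoidHom (parab Γ (aSet Γ {x})) =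
        conjBy (parab Γ (aSet Γ {x})) f :=
  autStar_maps_aSet_to_conjugate_general Γ φ h

end PCG
end

section
/- Let Γ be a finite simple graph, G = G(Γ), and let H = G(Y₁) and K = G(Y₂) be canonical parabolic subgroups of G. Let θ be an automorphism of G such that θ(H) = H^f and θ(K) = K^g for some f, g ∈ G. Then there exists h ∈ G such that θ(H ∩ K) = (H ∩ K)^h. -/
/-! Killing the generators outside `Y` defines a retraction `ρ_Y` of `G` onto `G(Y)`, and
`ρ_{Y₁}` maps `G(Y₂)` into `G(Y₁ ∩ Y₂) = H ∩ K`. Applying `ρ_{Y₁}` to an element of `H^f ∩ K^g`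
shows that this intersection lies in a conjugate of `H ∩ K`; hence so do `θ(H ∩ K)` and, since
`θ⁻¹` satisfies the same hypotheses, `θ⁻¹(H ∩ K)`. A retract `P` is rigid: `P^c ≤ P` forces
`P^c = P`, because `c` may be replaced by `ρ(c) ∈ P`. Rigidity of `P = H ∩ K` turns the two
inclusions into `θ(P) = P^h`. -/

namespace PCG

section Retraction

variable {G : Type*} [Group G]

theorem mem_conjBy {H : Subgroup G} {a u : G} :
    u ∈ conjBy H a ↔ ∃ x ∈ H, a⁻¹ * x * a = u := by
  simp [conjBy]

theorem conjBy_one (H : Subgroup G) : conjBy H 1 = H := by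
  ext u; simp [mem_conjBy]

theorem conjBy_conjBy (H : Subgroup G) (a c : G) :
    conjBy (conjBy H a) c = conjBy H (a * c) := by
  ext u
  simp only [mem_conjBy]
  constructor
  · rintro ⟨_, ⟨y, hy, rfl⟩, rfl⟩
    exact ⟨y, hy, by group⟩
  · rintro ⟨y, hy, rfl⟩
    exact ⟨a⁻¹ * y * a, ⟨y, hy, rfl⟩, by group⟩

theorem conjBy_conjBy_inv (H : Subgroup G) (c : G) : conjBy (conjBy H c) c⁻¹ = H := by
  rw [conjBy_conjBy, mul_inv_cancel, conjBy_one]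

theorem conjBy_inv_conjBy (H : Subgroup G) (c : G) : conjBy (conjBy H c⁻¹) c = H := by
  rw [conjBy_conjBy, inv_mul_cancel, conjBy_one]

theorem conjBy_mono {H K : Subgroup G} (h : H ≤ K) (a : G) : conjBy H a ≤ conjBy K a :=
  Subgroup.map_mono h

theorem conjBy_of_mem {H : Subgroup G} {d : G} (hd : d ∈ H) : conjBy H d = H := by
  ext u
  rw [mem_conjBy]
  constructor
  · rintro ⟨x, hx, rfl⟩
    exact mul_mem (mul_mem (inv_mem hd) hx) hd
  · intro hu
    exact ⟨d * u * d⁻¹, mul_mem (mul_mem hd hu) (inv_mem hd), by group⟩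

theorem map_conjBy (θ : MulAut G) (H : Subgroup G) (a : G) :
    (conjBy H a).map θ.toMonoidHom = conjBy (H.map θ.toMonoidHom) (θ a) := by
  ext u
  simp only [mem_conjBy, Subgroup.mem_map, MulEquiv.coe_toMonoidHom]
  constructor
  · rintro ⟨_, ⟨y, hy, rfl⟩, rfl⟩
    exact ⟨θ y, ⟨y, hy, rfl⟩, by simp⟩
  · rintro ⟨_, ⟨y, hy, rfl⟩, rfl⟩
    exact ⟨a⁻¹ * y * a, ⟨y, hy, rfl⟩, by simp⟩

theorem map_map_inv (θ : MulAut G) (H : Subgroup G) :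
    (H.map θ⁻¹.toMonoidHom).map θ.toMonoidHom = H := by
  ext u; simp

theorem map_inv_map (θ : MulAut G) (H : Subgroup G) :
    (H.map θ.toMonoidHom).map θ⁻¹.toMonoidHom = H := by
  simpa using map_map_inv θ⁻¹ H

theorem map_inv_eq_conjBy {θ : MulAut G} {H : Subgroup G} {f : G}
    (h : H.map θ.toMonoidHom = conjBy H f) :
    H.map θ⁻¹.toMonoidHom = conjBy H (θ⁻¹ f)⁻¹ := by
  have hH : H = conjBy (H.map θ⁻¹.toMonoidHom) (θ⁻¹ f) := by
    conv_lhs => rw [← map_inv_map θ H, h, map_conjBy]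
  calc H.map θ⁻¹.toMonoidHom = conjBy (conjBy (H.map θ⁻¹.toMonoidHom) (θ⁻¹ f)) (θ⁻¹ f)⁻¹ :=
        (conjBy_conjBy_inv _ _).symm
    _ = conjBy H (θ⁻¹ f)⁻¹ := by rw [← hH]

structure IsRetractionOnto (r : G →* G) (H : Subgroup G) : Prop where
  mem : ∀ x, r x ∈ H
  apply_of_mem : ∀ h ∈ H, r h = h

namespace IsRetractionOnto

variable {r : G →* G} {H K : Subgroup G}

/-- On `H`, conjugation by `c` agrees with conjugation by `r c ∈ H`. -/
theorem conjBy_eq_of_conjBy_le (hr : IsRetractionOnto r H) {c : G} (hc : conjBy H c ≤ H) :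
    conjBy H c = H := by
  have hconj : ∀ x ∈ H, c⁻¹ * x * c = (r c)⁻¹ * x * r c := fun x hx => by
    rw [← hr.apply_of_mem _ (hc (mem_conjBy.2 ⟨x, hx, rfl⟩)), map_mul, map_mul, map_inv,
      hr.apply_of_mem x hx]
  calc conjBy H c = conjBy H (r c) := by
        ext u
        simp only [mem_conjBy]
        constructor
        · rintro ⟨x, hx, rfl⟩; exact ⟨x, hx, (hconj x hx).symm⟩
        · rintro ⟨x, hx, rfl⟩; exact ⟨x, hx, hconj x hx⟩
    _ = H := conjBy_of_mem (hr.mem c)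

theorem conjBy_eq_of_le_conjBy (hr : IsRetractionOnto r H) {c : G} (hc : H ≤ conjBy H c) :
    conjBy H c = H := by
  have hinv : conjBy H c⁻¹ = H := hr.conjBy_eq_of_conjBy_le <| by
    simpa only [conjBy_conjBy_inv] using conjBy_mono hc c⁻¹
  calc conjBy H c = conjBy (conjBy H c⁻¹) c := by rw [hinv]
    _ = H := conjBy_inv_conjBy H c

/-- Applying `r` to `a u a⁻¹ = s⁻¹ β s` with `s = b a⁻¹` and `β ∈ K` moves `β` into `H ⊓ K`. -/
theorem conjBy_inf_conjBy_le (hr : IsRetractionOnto r H) (hK : K.map r ≤ K) (a b : G) :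
    conjBy H a ⊓ conjBy K b ≤ conjBy (H ⊓ K) (r (b * a⁻¹) * a) := by
  rintro u ⟨hua, hub⟩
  obtain ⟨α, hα, rfl⟩ := mem_conjBy.1 hua
  obtain ⟨β, hβ, hβu⟩ := mem_conjBy.1 hub
  have hα' : α = (b * a⁻¹)⁻¹ * β * (b * a⁻¹) := by
    calc α = a * (a⁻¹ * α * a) * a⁻¹ := by group
      _ = (b * a⁻¹)⁻¹ * β * (b * a⁻¹) := by rw [← hβu]; group
  have hrβ : r β ∈ H ⊓ K := ⟨hr.mem β, hK ⟨β, hβ, rfl⟩⟩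
  rw [← conjBy_conjBy]
  refine mem_conjBy.2 ⟨α, mem_conjBy.2 ⟨r β, hrβ, ?_⟩, rfl⟩
  rw [← hr.apply_of_mem α hα, hα']
  simp only [map_mul, map_inv]

theorem exists_map_inf_le_conjBy (hr : IsRetractionOnto r H) (hK : K.map r ≤ K)
    {θ : MulAut G} {f g : G} (h1 : H.map θ.toMonoidHom = conjBy H f)
    (h2 : K.map θ.toMonoidHom = conjBy K g) :
    ∃ c, (H ⊓ K).map θ.toMonoidHom ≤ conjBy (H ⊓ K) c := by
  refine ⟨_, le_trans ?_ (hr.conjBy_inf_conjBy_le hK f g)⟩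
  rw [← h1, ← h2]
  exact le_inf (Subgroup.map_mono inf_le_left) (Subgroup.map_mono inf_le_right)

end IsRetractionOnto

/-- `P ≤ θ(P)^{θ b} ≤ P^{a θ(b)}`, and rigidity of the retract `P` turns both inclusions into
equalities. -/
theorem map_eq_conjBy_of_le_conjBy {r : G →* G} {P : Subgroup G} (hr : IsRetractionOnto r P)
    {θ : MulAut G} {a b : G} (ha : P.map θ.toMonoidHom ≤ conjBy P a)
    (hb : P.map θ⁻¹.toMonoidHom ≤ conjBy P b) :
    P.map θ.toMonoidHom = conjBy P (θ b)⁻¹ := by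
  have hlow : P ≤ conjBy (P.map θ.toMonoidHom) (θ b) := by
    calc P = (P.map θ⁻¹.toMonoidHom).map θ.toMonoidHom := (map_map_inv θ P).symm
      _ ≤ (conjBy P b).map θ.toMonoidHom := Subgroup.map_mono hb
      _ = conjBy (P.map θ.toMonoidHom) (θ b) := map_conjBy θ P b
  have hup : conjBy (P.map θ.toMonoidHom) (θ b) ≤ conjBy P (a * θ b) := by
    rw [← conjBy_conjBy]; exact conjBy_mono ha _
  have hrigid : conjBy P (a * θ b) = P := hr.conjBy_eq_of_le_conjBy (hlow.trans hup)
  have hmid : conjBy (P.map θ.toMonoidHom) (θ b) = P :=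
    le_antisymm (hup.trans hrigid.le) hlow
  calc P.map θ.toMonoidHom = conjBy (conjBy (P.map θ.toMonoidHom) (θ b)) (θ b)⁻¹ :=
        (conjBy_conjBy_inv _ _).symm
    _ = conjBy P (θ b)⁻¹ := by rw [hmid]

theorem exists_map_inf_eq_conjBy {r s : G →* G} {H K : Subgroup G} (hr : IsRetractionOnto r H)
    (hK : K.map r ≤ K) (hs : IsRetractionOnto s (H ⊓ K)) {θ : MulAut G} {f g : G}
    (h1 : H.map θ.toMonoidHom = conjBy H f) (h2 : K.map θ.toMonoidHom = conjBy K g) :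
    ∃ h, (H ⊓ K).map θ.toMonoidHom = conjBy (H ⊓ K) h := by
  obtain ⟨a, ha⟩ := hr.exists_map_inf_le_conjBy hK h1 h2
  obtain ⟨b, hb⟩ := hr.exists_map_inf_le_conjBy hK (map_inv_eq_conjBy h1) (map_inv_eq_conjBy h2)
  exact ⟨_, map_eq_conjBy_of_le_conjBy hs ha hb⟩

end Retraction

section Parabolic

variable {X : Type*} {Γ : SimpleGraph X}

theorem gen_commute {x y : X} (h : Γ.Adj x y) : Commute (gen Γ x) (gen Γ y) := by
  have hrel := PresentedGroup.one_of_mem (rels := raagRels Γ) ⟨x, y, h, rfl⟩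
  simp only [map_mul, map_inv] at hrel
  exact commutatorElement_eq_one_iff_commute.1 hrel

open scoped Classical in
noncomputable def parabRetraction (Γ : SimpleGraph X) (Z : Set X) : RAAG Γ →* RAAG Γ :=
  PresentedGroup.toGroup (f := fun x => if x ∈ Z then gen Γ x else 1) <| by
    rintro _ ⟨x, y, hxy, rfl⟩
    have hcomm : Commute (if x ∈ Z then gen Γ x else 1) (if y ∈ Z then gen Γ y else 1) := by
      split_ifs <;> simp [gen_commute hxy]
    simpa [commutatorElement_def] using commutatorElement_eq_one_iff_commute.2 hcomm

open scoped Classical in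
theorem parabRetraction_gen (Z : Set X) (x : X) :
    parabRetraction Γ Z (gen Γ x) = if x ∈ Z then gen Γ x else 1 :=
  PresentedGroup.toGroup.of _

theorem parab_mono {Y Z : Set X} (h : Y ⊆ Z) : parab Γ Y ≤ parab Γ Z :=
  Subgroup.closure_mono (Set.image_mono h)

theorem isRetractionOnto_parabRetraction (Z : Set X) :
    IsRetractionOnto (parabRetraction Γ Z) (parab Γ Z) where
  mem u := by
    refine PresentedGroup.generated_by _ ((parab Γ Z).comap (parabRetraction Γ Z)) (fun x => ?_) u
    change parabRetraction Γ Z (gen Γ x) ∈ parab Γ Z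
    rw [parabRetraction_gen]
    split_ifs with hx
    · exact Subgroup.subset_closure ⟨x, hx, rfl⟩
    · exact one_mem _
  apply_of_mem u hu := by
    refine MonoidHom.eqOn_closure (g := MonoidHom.id _) ?_ hu
    rintro _ ⟨x, hx, rfl⟩
    simp [parabRetraction_gen, hx]

theorem map_parabRetraction_parab_le (Z Y : Set X) :
    (parab Γ Y).map (parabRetraction Γ Z) ≤ parab Γ (Z ∩ Y) := by
  rw [parab, MonoidHom.map_closure, Subgroup.closure_le]
  rintro _ ⟨_, ⟨y, hy, rfl⟩, rfl⟩
  rw [parabRetraction_gen]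
  split_ifs with hyZ
  · exact Subgroup.subset_closure ⟨y, ⟨hyZ, hy⟩, rfl⟩
  · exact one_mem _

theorem parab_inf_parab (Y₁ Y₂ : Set X) : parab Γ Y₁ ⊓ parab Γ Y₂ = parab Γ (Y₁ ∩ Y₂) := by
  refine le_antisymm (fun u ⟨hu₁, hu₂⟩ => ?_)
    (le_inf (parab_mono Set.inter_subset_left) (parab_mono Set.inter_subset_right))
  rw [← (isRetractionOnto_parabRetraction Y₁).apply_of_mem u hu₁]
  exact map_parabRetraction_parab_le Y₁ Y₂ ⟨u, hu₂, rfl⟩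

end Parabolic

theorem parab_inter_conj_general {X : Type*} (Γ : SimpleGraph X)
    (Y₁ Y₂ : Set X) (θ : MulAut (RAAG Γ)) (f g : RAAG Γ)
    (h1 : Subgroup.map θ.toMonoidHom (parab Γ Y₁) = conjBy (parab Γ Y₁) f)
    (h2 : Subgroup.map θ.toMonoidHom (parab Γ Y₂) = conjBy (parab Γ Y₂) g) :
    ∃ h : RAAG Γ,
      Subgroup.map θ.toMonoidHom (parab Γ Y₁ ⊓ parab Γ Y₂) =
        conjBy (parab Γ Y₁ ⊓ parab Γ Y₂) h := by
  have hY₂ : (parab Γ Y₂).map (parabRetraction Γ Y₁) ≤ parab Γ Y₂ :=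
    (map_parabRetraction_parab_le Y₁ Y₂).trans (parab_mono Set.inter_subset_right)
  have hinter : IsRetractionOnto (parabRetraction Γ (Y₁ ∩ Y₂)) (parab Γ Y₁ ⊓ parab Γ Y₂) :=
    parab_inf_parab Y₁ Y₂ ▸ isRetractionOnto_parabRetraction (Y₁ ∩ Y₂)
  exact exists_map_inf_eq_conjBy (isRetractionOnto_parabRetraction Y₁) hY₂ hinter h1 h2

/-- If an automorphism carries two parabolic subgroups to
conjugates of themselves, then it carries their intersection to a conjugate
of the intersection. -/
theorem parab_inter_conj {X : Type*} [Fintype X] (Γ : SimpleGraph X)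
    (Y₁ Y₂ : Set X) (θ : MulAut (RAAG Γ)) (f g : RAAG Γ)
    (h1 : Subgroup.map θ.toMonoidHom (parab Γ Y₁) = conjBy (parab Γ Y₁) f)
    (h2 : Subgroup.map θ.toMonoidHom (parab Γ Y₂) = conjBy (parab Γ Y₂) g) :
    ∃ h : RAAG Γ,
      Subgroup.map θ.toMonoidHom (parab Γ Y₁ ⊓ parab Γ Y₂) =
        conjBy (parab Γ Y₁ ⊓ parab Γ Y₂) h :=
  parab_inter_conj_general Γ Y₁ Y₂ θ f g h1 h2

end PCG
end

section
/- Let Γ be a finite simple graph with vertex set X, let x, y ∈ X, and let C be the vertex set of a connected component of the full subgraph of Γ on X \ y^⊥. If 𝔞(x) is not contained in C ∪ y^⊥ and 𝔞(x) ∩ C ≠ ∅, then y ∈ 𝔞(x). -/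
/-! A vertex `z` of the link of `x` lying outside `y^⊥` would be adjacent or equal to both a vertex
of `𝔞(x) ∩ C` and a vertex of `𝔞(x) \ (C ∪ y^⊥)`, joining them by a path outside `y^⊥`. Hence the
link of `x` lies in `y^⊥`, i.e. `y ∈ 𝔞(x)`. -/

namespace PCG

section

variable {X : Type*} {Γ : SimpleGraph X}

theorem mem_perp_singleton_iff {u v : X} : u ∈ perp Γ {v} ↔ u = v ∨ Γ.Adj u v := by
  simp [perp]

theorem mem_perp_singleton_comm {u v : X} : u ∈ perp Γ {v} ↔ v ∈ perp Γ {u} := by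
  simp only [mem_perp_singleton_iff, eq_comm, Γ.adj_comm]

theorem mem_perp_iff_forall {u : X} {Y : Set X} : u ∈ perp Γ Y ↔ ∀ y ∈ Y, u ∈ perp Γ {y} := by
  simp [perp]

theorem aSet_singleton (x : X) : aSet Γ {x} = perp Γ (perp Γ {x} \ {x}) := by
  simp [aSet]

namespace IsCompOf

variable {S C : Set X}

theorem mem_of_adj_s18 (hC : IsCompOf Γ S C) {u v : X} (hu : u ∈ C) (hv : v ∈ S)
    (huv : Γ.Adj u v) : v ∈ C := by
  obtain ⟨K, rfl⟩ := hC
  obtain ⟨u, hK, rfl⟩ := hu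
  have hreach : (Γ.induce S).Reachable u ⟨v, hv⟩ :=
    SimpleGraph.Adj.reachable (G := Γ.induce S) (by simpa using huv)
  exact ⟨⟨v, hv⟩, (SimpleGraph.ConnectedComponent.sound hreach).symm.trans hK, rfl⟩

theorem mem_of_mem_perp (hC : IsCompOf Γ S C) {u v : X} (hu : u ∈ C) (hv : v ∈ S)
    (huv : v ∈ perp Γ {u}) : v ∈ C := by
  rcases mem_perp_singleton_iff.mp huv with rfl | hadj
  · exact hu
  · exact hC.mem_of_adj_s18 hu hv hadj.symm

end IsCompOf

end

theorem mem_aSet_of_component_general {X : Type*} (Γ : SimpleGraph X)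
    (x y : X) (C : Set X) (hC : IsCompOf Γ ((perp Γ {y})ᶜ) C)
    (h1 : ¬ aSet Γ {x} ⊆ C ∪ perp Γ {y}) (h2 : (aSet Γ {x} ∩ C).Nonempty) :
    y ∈ aSet Γ {x} := by
  obtain ⟨a, haA, haC⟩ := h2
  obtain ⟨b, hbA, hbCy⟩ := Set.not_subset.mp h1
  obtain ⟨hbC, hby⟩ := not_or.mp hbCy
  rw [aSet_singleton, mem_perp_iff_forall] at haA hbA ⊢
  intro z hz
  by_contra hyz
  have hzy : z ∈ (perp Γ {y})ᶜ := fun h => hyz (mem_perp_singleton_comm.mp h)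
  have hzC : z ∈ C := hC.mem_of_mem_perp haC hzy (mem_perp_singleton_comm.mp (haA z hz))
  exact hbC (hC.mem_of_mem_perp hzC hby (hbA z hz))

/-- If `C` is a component of `Γ_{y^⊥}`, `𝔞(x) ⊄ C ∪ y^⊥` and
`𝔞(x) ∩ C ≠ ∅`, then `y ∈ 𝔞(x)`. -/
theorem mem_aSet_of_component {X : Type*} [Fintype X] (Γ : SimpleGraph X)
    (x y : X) (C : Set X) (hC : IsCompOf Γ ((perp Γ {y})ᶜ) C)
    (h1 : ¬ aSet Γ {x} ⊆ C ∪ perp Γ {y}) (h2 : (aSet Γ {x} ∩ C).Nonempty) :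
    y ∈ aSet Γ {x} :=
  mem_aSet_of_component_general Γ x y C hC h1 h2

end PCG
end
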